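/- Let P be a poset and (G,f) a vertex-minimal P-filtered graph (no collapsible edges). Then the canonical surjection ⊕_{v∈V} P_{f(v)}·{v} → H₀(G,f), sending {v} to the class [v], is a finite projective cover, and consequently the 0th Betti table of H₀(G,f) equals the sum over v ∈ V of the delta function δ_{f(v)}. -/

import Mathlib

/-!
If no edge is collapsible, an edge of grade `≤ p` is either a loop or has both endpoints born
strictly before `p`. So restricting vertex chains to the vertices born at `p` kills boundaries and
gives a surjection `H₀(G,f)_p → k⟨{v | f v = p}⟩` vanishing on everything coming from lower grades.
A surjection `⊕_j P_{f'(j)} → H₀(G,f)` therefore needs at least `#{v | f v = p}` generators of each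
grade `p`. Summing over grades, the canonical surjection has the fewest summands; a cover with
equally many summands must then match it grade by grade.
-/

structure Grph where
  V : Type
  E : Type
  [fintV : Fintype V]
  [fintE : Fintype E]
  [decV : DecidableEq V]
  [decE : DecidableEq E]
  bnd : E → V × V

attribute [instance] Grph.fintV Grph.fintE Grph.decV Grph.decE

/-- boundary map k⟨E⟩ → k⟨V⟩, e ↦ e₁ - e₀ -/
noncomputable def Grph.d (G : Grph) (k : Type) [Field k] :
    (G.E →₀ k) →ₗ[k] (G.V →₀ k) :=
  Finsupp.linearCombination k fun e =>
    Finsupp.single (G.bnd e).2 1 - Finsupp.single (G.bnd e).1 1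

def Grph.adj (G : Grph) (v w : G.V) : Prop :=
  ∃ e, G.bnd e = (v, w) ∨ G.bnd e = (w, v)

structure FGrph (P : Type) [PartialOrder P] extends Grph where
  fV : V → P
  fE : E → P
  mono0 : ∀ e, fV (bnd e).1 ≤ fE e
  mono1 : ∀ e, fV (bnd e).2 ≤ fE e

variable {P : Type} [PartialOrder P]

/-- boundary map of the sublevel graph at grade r -/
noncomputable def FGrph.dr (G : FGrph P) (k : Type) [Field k] (r : P) :
    ({e : G.E // G.fE e ≤ r} →₀ k) →ₗ[k] ({v : G.V // G.fV v ≤ r} →₀ k) :=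
  Finsupp.linearCombination k fun e =>
    Finsupp.single ⟨(G.bnd e.1).2, le_trans (G.mono1 e.1) e.2⟩ 1 -
    Finsupp.single ⟨(G.bnd e.1).1, le_trans (G.mono0 e.1) e.2⟩ 1

noncomputable def FGrph.vmap (G : FGrph P) (k : Type) [Field k] {r s : P} (h : r ≤ s) :
    ({v : G.V // G.fV v ≤ r} →₀ k) →ₗ[k] ({v : G.V // G.fV v ≤ s} →₀ k) :=
  Finsupp.lmapDomain k k fun v => ⟨v.1, le_trans v.2 h⟩

noncomputable def FGrph.emap (G : FGrph P) (k : Type) [Field k] {r s : P} (h : r ≤ s) :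
    ({e : G.E // G.fE e ≤ r} →₀ k) →ₗ[k] ({e : G.E // G.fE e ≤ s} →₀ k) :=
  Finsupp.lmapDomain k k fun e => ⟨e.1, le_trans e.2 h⟩

lemma FGrph.dNat (G : FGrph P) (k : Type) [Field k] {r s : P} (h : r ≤ s) :
    (G.dr k s).comp (G.emap k h) = (G.vmap k h).comp (G.dr k r) := by
  apply Finsupp.lhom_ext
  intro e a
  show (G.dr k s) ((G.emap k h) (Finsupp.single e a)) =
    (G.vmap k h) ((G.dr k r) (Finsupp.single e a))
  rw [FGrph.emap, Finsupp.lmapDomain_apply, Finsupp.mapDomain_single, FGrph.dr,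
    Finsupp.linearCombination_single, FGrph.dr, Finsupp.linearCombination_single,
    map_smul, map_sub, FGrph.vmap, Finsupp.lmapDomain_apply, Finsupp.lmapDomain_apply,
    Finsupp.mapDomain_single, Finsupp.mapDomain_single]

/-- 0-dim homology of the sublevel graph at r -/
noncomputable abbrev FGrph.H0at (G : FGrph P) (k : Type) [Field k] (r : P) :=
  ({v : G.V // G.fV v ≤ r} →₀ k) ⧸ LinearMap.range (G.dr k r)

noncomputable def FGrph.H0map (G : FGrph P) (k : Type) [Field k] {r s : P} (h : r ≤ s) :
    G.H0at k r →ₗ[k] G.H0at k s :=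
  Submodule.mapQ _ _ (G.vmap k h) (by
    rintro x ⟨y, rfl⟩
    exact ⟨G.emap k h y, by
      have := LinearMap.congr_fun (G.dNat k h) y
      simpa using this⟩)

noncomputable abbrev FGrph.H1at (G : FGrph P) (k : Type) [Field k] (r : P) :=
  LinearMap.ker (G.dr k r)

noncomputable def FGrph.H1map (G : FGrph P) (k : Type) [Field k] {r s : P} (h : r ≤ s) :
    G.H1at k r →ₗ[k] G.H1at k s :=
  (G.emap k h).restrict (p := LinearMap.ker (G.dr k r)) (q := LinearMap.ker (G.dr k s))
    (by
      intro x hx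
      have := LinearMap.congr_fun (G.dNat k h) x
      simp only [LinearMap.mem_ker] at hx ⊢
      simp only [LinearMap.coe_comp, Function.comp_apply] at this
      rw [this, hx, map_zero])

def FGrph.adjAt (G : FGrph P) (r : P) (a b : G.V) : Prop :=
  ∃ e, G.fE e ≤ r ∧ (G.bnd e = (a, b) ∨ G.bnd e = (b, a))

def FGrph.connAt (G : FGrph P) (r : P) : G.V → G.V → Prop :=
  Relation.ReflTransGen (G.adjAt r)

def FGrph.pi0At (G : FGrph P) (r : P) :=
  Quot (fun a b : {v : G.V // G.fV v ≤ r} => G.adjAt r a.1 b.1)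

def FGrph.Collapsible (G : FGrph P) (e : G.E) : Prop :=
  (G.bnd e).1 ≠ (G.bnd e).2 ∧
    (G.fE e = G.fV (G.bnd e).1 ∨ G.fE e = G.fV (G.bnd e).2)

def FGrph.delete (G : FGrph P) (e : G.E) : FGrph P where
  V := G.V
  E := {d : G.E // d ≠ e}
  bnd d := G.bnd d.1
  fV := G.fV
  fE d := G.fE d.1
  mono0 d := G.mono0 d.1
  mono1 d := G.mono1 d.1

def FGrph.Deletable (G : FGrph P) (e : G.E) : Prop :=
  (G.delete e).connAt (G.fE e) (G.bnd e).1 (G.bnd e).2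

def FGrph.collapse (G : FGrph P) (e : G.E) (x y : G.V) (hxy : y ≠ x)
    (hf : G.fV y ≤ G.fV x) : FGrph P where
  V := {v : G.V // v ≠ x}
  E := {d : G.E // d ≠ e}
  bnd d :=
    (if h : (G.bnd d.1).1 = x then ⟨y, hxy⟩ else ⟨(G.bnd d.1).1, h⟩,
     if h : (G.bnd d.1).2 = x then ⟨y, hxy⟩ else ⟨(G.bnd d.1).2, h⟩)
  fV v := G.fV v.1
  fE d := G.fE d.1
  mono0 d := by
    dsimp only
    split
    · exact le_trans hf (by rw [← ‹(G.bnd d.1).1 = x›]; exact G.mono0 d.1)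
    · exact G.mono0 d.1
  mono1 d := by
    dsimp only
    split
    · exact le_trans hf (by rw [← ‹(G.bnd d.1).2 = x›]; exact G.mono1 d.1)
    · exact G.mono1 d.1

/-- A `P`-persistence module: a functor `P → Vec_k`, given explicitly. -/
structure PersMod (P : Type) [PartialOrder P] (k : Type) [Field k] : Type 1 where
  obj : P → Type
  [acg : ∀ r, AddCommGroup (obj r)]
  [mod : ∀ r, Module k (obj r)]
  map : ∀ {r s : P}, r ≤ s → (obj r →ₗ[k] obj s)
  map_refl : ∀ (r : P) (x : obj r), map (le_refl r) x = x
  map_trans : ∀ {r s t : P} (h1 : r ≤ s) (h2 : s ≤ t) (x : obj r),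
    map h2 (map h1 x) = map (le_trans h1 h2) x

attribute [instance] PersMod.acg PersMod.mod

variable {P : Type} [PartialOrder P]

/-- A morphism of persistence modules: a natural transformation. -/
structure PersHom (k : Type) [Field k] (M N : PersMod P k) where
  app : ∀ r : P, M.obj r →ₗ[k] N.obj r
  nat : ∀ {r s : P} (h : r ≤ s) (x : M.obj r),
    app s (M.map h x) = N.map h (app r x)

/-- The finite direct sum of indicator projectives `⊕_{i ∈ I} P_{f i}`:
at grade `r` it is the free vector space on `{i // f i ≤ r}`, with structure maps
induced by the inclusions of index sets.  For `I = Unit` this is the indicator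
projective `P_{f ()}` itself. -/
noncomputable def freePers (k : Type) [Field k] (I : Type) (f : I → P) : PersMod P k where
  obj r := {i : I // f i ≤ r} →₀ k
  map h := Finsupp.lmapDomain k k fun i => ⟨i.1, le_trans i.2 h⟩
  map_refl r x := by
    rw [Finsupp.lmapDomain_apply,
      show (fun i : {i : I // f i ≤ r} => (⟨i.1, le_trans i.2 (le_refl r)⟩ :
        {i : I // f i ≤ r})) = id from rfl, Finsupp.mapDomain_id]
  map_trans h1 h2 x := by
    rw [Finsupp.lmapDomain_apply, Finsupp.lmapDomain_apply, Finsupp.lmapDomain_apply,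
      ← Finsupp.mapDomain_comp]
    rfl

/-- A morphism of persistence modules is surjective if it is so at every grade. -/
def PersHom.Surj {k : Type} [Field k] {M N : PersMod P k} (g : PersHom k M N) : Prop :=
  ∀ r : P, Function.Surjective (g.app r)
/-- `g : ⊕_{i∈I} P_{f i} → M` is a finite projective cover: it is surjective and the
total number of indecomposable summands is minimal among all such surjections. -/
def IsProjCover {k : Type} [Field k] {I : Type} [Fintype I] (f : I → P) (M : PersMod P k)
    (g : PersHom k (freePers k I f) M) : Prop :=
  g.Surj ∧ ∀ (J : Type) (_ : Fintype J) (f' : J → P)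
    (g' : PersHom k (freePers k J f') M), g'.Surj →
      Fintype.card I ≤ Fintype.card J
/-- H₀ of a filtered graph as a persistence module -/
noncomputable def FGrph.H0Mod (G : FGrph P) (k : Type) [Field k] : PersMod P k where
  obj r := G.H0at k r
  map h := G.H0map k h
  map_refl r x := by
    obtain ⟨y, rfl⟩ := Submodule.Quotient.mk_surjective _ x
    show G.H0map k (le_refl r) (Submodule.Quotient.mk y) = Submodule.Quotient.mk y
    rw [FGrph.H0map, Submodule.mapQ_apply]
    congr 1
    rw [FGrph.vmap, Finsupp.lmapDomain_apply,
      show (fun v : {v : G.V // G.fV v ≤ r} => (⟨v.1, le_trans v.2 (le_refl r)⟩ :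
        {v : G.V // G.fV v ≤ r})) = id from rfl, Finsupp.mapDomain_id]
  map_trans h1 h2 x := by
    obtain ⟨y, rfl⟩ := Submodule.Quotient.mk_surjective _ x
    show G.H0map k h2 (G.H0map k h1 (Submodule.Quotient.mk y)) =
      G.H0map k (le_trans h1 h2) (Submodule.Quotient.mk y)
    rw [FGrph.H0map, FGrph.H0map, FGrph.H0map, Submodule.mapQ_apply,
      Submodule.mapQ_apply, Submodule.mapQ_apply]
    congr 1
    rw [FGrph.vmap, FGrph.vmap, FGrph.vmap, Finsupp.lmapDomain_apply,
      Finsupp.lmapDomain_apply, Finsupp.lmapDomain_apply, ← Finsupp.mapDomain_comp]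
    rfl

/-- The canonical surjection `⊕_{v∈V} P_{f(v)} → H₀(G,f)`, sending `{v}` to `[v]`. -/
noncomputable def FGrph.covHom (G : FGrph P) (k : Type) [Field k] :
    PersHom k (freePers k G.V G.fV) (G.H0Mod k) where
  app r := (LinearMap.range (G.dr k r)).mkQ
  nat {r s} h x := by
    show (LinearMap.range (G.dr k s)).mkQ ((freePers k G.V G.fV).map h x) =
      G.H0map k h ((LinearMap.range (G.dr k r)).mkQ x)
    rfl

section CardFiber

variable {α β γ : Type*} [Finite α] [Finite β] {f : α → γ} {g : β → γ}

theorem exists_embedding_comp_eq_of_card_fiber_le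
    (h : ∀ c, Nat.card {a // f a = c} ≤ Nat.card {b // g b = c}) :
    ∃ e : α ↪ β, ∀ a, g (e a) = f a := by
  have fiber_emb (c : γ) : Nonempty ({a // f a = c} ↪ {b // g b = c}) := by
    have := Fintype.ofFinite {a // f a = c}
    have := Fintype.ofFinite {b // g b = c}
    exact Function.Embedding.nonempty_of_card_le (by simpa [Nat.card_eq_fintype_card] using h c)
  let σ := Function.Embedding.sigmaMap (β' := fun c => {b // g b = c}) (Function.Embedding.refl γ)
    fun c => (fiber_emb c).some
  refine ⟨(Equiv.sigmaFiberEquiv f).symm.toEmbedding.trans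
    (σ.trans (Equiv.sigmaFiberEquiv g).toEmbedding), fun a => ?_⟩
  exact ((fiber_emb (f a)).some ⟨a, rfl⟩).2

theorem card_le_card_of_card_fiber_le
    (h : ∀ c, Nat.card {a // f a = c} ≤ Nat.card {b // g b = c}) :
    Nat.card α ≤ Nat.card β :=
  have ⟨e, _⟩ := exists_embedding_comp_eq_of_card_fiber_le h
  Nat.card_le_card_of_injective e e.injective

theorem card_fiber_eq_of_card_fiber_le
    (h : ∀ c, Nat.card {a // f a = c} ≤ Nat.card {b // g b = c})
    (hcard : Nat.card β ≤ Nat.card α) (c : γ) :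
    Nat.card {a // f a = c} = Nat.card {b // g b = c} := by
  obtain ⟨e, he⟩ := exists_embedding_comp_eq_of_card_fiber_le h
  let E := Equiv.ofBijective e (e.injective.bijective_of_nat_card_le hcard)
  exact Nat.card_congr (E.subtypeEquiv fun a => by simp [E, he])

end CardFiber

theorem freePers_map_single {k : Type} [Field k] {I : Type} {f : I → P} {r s : P} (h : r ≤ s)
    (i : {i // f i ≤ r}) (a : k) :
    (freePers k I f).map h (Finsupp.single i a) = Finsupp.single ⟨i.1, i.2.trans h⟩ a :=
  Finsupp.mapDomain_single

theorem PersHom.finrank_le_card_fiber {k : Type} [Field k] {M : PersMod P k} {J : Type}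
    [Finite J] {fJ : J → P} (g : PersHom k (freePers k J fJ) M) (hg : g.Surj) {p : P}
    {W : Type*} [AddCommGroup W] [Module k W] (φ : M.obj p →ₗ[k] W)
    (hφ : Function.Surjective φ) (hφ_lt : ∀ q (hq : q < p) x, φ (M.map hq.le x) = 0) :
    Module.finrank k W ≤ Nat.card {j // fJ j = p} := by
  classical
  have := Fintype.ofFinite J
  let ψ : ({j // fJ j ≤ p} →₀ k) →ₗ[k] W := φ ∘ₗ g.app p
  let gen (j : {j // fJ j = p}) : W := ψ (Finsupp.single ⟨j.1, j.2.le⟩ 1)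
  have hψ_mem (y) : ψ y ∈ Submodule.span k (Set.range gen) := by
    induction y using Finsupp.induction_linear with
    | zero => simp
    | add y z hy hz => simpa using add_mem hy hz
    | single j a =>
      rcases j.2.lt_or_eq with hlt | heq
      · have hj : ψ (Finsupp.single j a) =
            φ (M.map hlt.le (g.app _ (Finsupp.single ⟨j.1, le_rfl⟩ a))) := by
          have hnat := g.nat hlt.le (Finsupp.single ⟨j.1, le_rfl⟩ a)
          rw [freePers_map_single] at hnat
          exact congrArg φ hnat
        rw [hj, hφ_lt _ hlt]
        exact zero_mem _
      · have hj : Finsupp.single j a = a • Finsupp.single ⟨j.1, heq.le⟩ (1 : k) := by simp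
        rw [hj, map_smul]
        exact Submodule.smul_mem _ _ (Submodule.subset_span ⟨⟨j.1, heq⟩, rfl⟩)
  have hspan : Submodule.span k (Set.range gen) = ⊤ := by
    refine eq_top_iff.2 fun w _ => ?_
    obtain ⟨y, rfl⟩ := hφ.comp (hg p) w
    exact hψ_mem y
  calc Module.finrank k W = Module.finrank k (Submodule.span k (Set.range gen)) := by
        rw [hspan, finrank_top]
    _ ≤ Fintype.card {j // fJ j = p} := finrank_range_le_card gen
    _ = Nat.card {j // fJ j = p} := Nat.card_eq_fintype_card.symm

namespace FGrph

theorem fV_lt_fE_of_not_collapsible (G : FGrph P) {e : G.E} (he : ¬ G.Collapsible e)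
    (hloop : (G.bnd e).1 ≠ (G.bnd e).2) :
    G.fV (G.bnd e).1 < G.fE e ∧ G.fV (G.bnd e).2 < G.fE e :=
  have hne := not_or.1 fun h => he ⟨hloop, h⟩
  ⟨(G.mono0 e).lt_of_ne' hne.1, (G.mono1 e).lt_of_ne' hne.2⟩

noncomputable def restrictBornAt (G : FGrph P) (k : Type) [Field k] (p : P) :
    ({v : G.V // G.fV v ≤ p} →₀ k) →ₗ[k] ({v : G.V // G.fV v = p} →₀ k) :=
  Finsupp.lcomapDomain (fun v => ⟨v.1, v.2.le⟩) fun _ _ h => Subtype.ext (Subtype.mk.inj h)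

theorem restrictBornAt_comp_dr (G : FGrph P) (k : Type) [Field k]
    (hvm : ∀ e : G.E, ¬ G.Collapsible e) (p : P) :
    (G.restrictBornAt k p).comp (G.dr k p) = 0 := by
  refine Finsupp.lhom_ext fun e a => Finsupp.ext fun v => ?_
  by_cases hloop : (G.bnd e.1).1 = (G.bnd e.1).2
  · simp [restrictBornAt, dr, hloop]
  · obtain ⟨h0, h1⟩ := G.fV_lt_fE_of_not_collapsible (hvm e.1) hloop
    have hv0 : (G.bnd e.1).1 ≠ v.1 := fun h => (h0.trans_le e.2).ne (h ▸ v.2)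
    have hv1 : (G.bnd e.1).2 ≠ v.1 := fun h => (h1.trans_le e.2).ne (h ▸ v.2)
    simp [restrictBornAt, Finsupp.lcomapDomain, dr, Subtype.ext_iff, hv0, hv1]

theorem restrictBornAt_surjective (G : FGrph P) (k : Type) [Field k] (p : P) :
    Function.Surjective (G.restrictBornAt k p) :=
  (Finsupp.leftInverse_lcomapDomain_mapDomain _ _).surjective

noncomputable def H0ToBornAt (G : FGrph P) (k : Type) [Field k]
    (hvm : ∀ e : G.E, ¬ G.Collapsible e) (p : P) :
    G.H0at k p →ₗ[k] ({v : G.V // G.fV v = p} →₀ k) :=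
  (LinearMap.range (G.dr k p)).liftQ (G.restrictBornAt k p)
    (LinearMap.range_le_ker_iff.2 (G.restrictBornAt_comp_dr k hvm p))

theorem H0ToBornAt_surjective (G : FGrph P) (k : Type) [Field k]
    (hvm : ∀ e : G.E, ¬ G.Collapsible e) (p : P) :
    Function.Surjective (G.H0ToBornAt k hvm p) := fun y =>
  have ⟨x, hx⟩ := G.restrictBornAt_surjective k p y
  ⟨Submodule.Quotient.mk x, hx⟩

theorem H0ToBornAt_H0map_of_lt (G : FGrph P) (k : Type) [Field k]
    (hvm : ∀ e : G.E, ¬ G.Collapsible e) {q p : P} (hqp : q < p) (x : G.H0at k q) :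
    G.H0ToBornAt k hvm p (G.H0map k hqp.le x) = 0 := by
  obtain ⟨y, rfl⟩ := Submodule.Quotient.mk_surjective _ x
  refine Finsupp.ext fun v => Finsupp.mapDomain_of_notMem_range _ _ ?_
  rintro ⟨w, hw⟩
  exact hqp.not_ge (v.2 ▸ (Subtype.mk.inj hw) ▸ w.2)

theorem card_born_le (G : FGrph P) (k : Type) [Field k] (hvm : ∀ e : G.E, ¬ G.Collapsible e)
    {J : Type} [Finite J] {fJ : J → P} (g : PersHom k (freePers k J fJ) (G.H0Mod k))
    (hg : g.Surj) (p : P) :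
    Nat.card {v : G.V // G.fV v = p} ≤ Nat.card {j : J // fJ j = p} := by
  classical
  have := g.finrank_le_card_fiber hg (G.H0ToBornAt k hvm p) (G.H0ToBornAt_surjective k hvm p)
    fun q hqp x => G.H0ToBornAt_H0map_of_lt k hvm hqp x
  rwa [Module.finrank_finsupp_self, ← Nat.card_eq_fintype_card] at this

end FGrph

/-- `β₀ = Σ_v δ_{f(v)}` is read off as the grade counts of an arbitrary finite projective cover. -/
theorem vertexMinimal_projective_cover (k : Type) [Field k] (G : FGrph P)
    (hvm : ∀ e : G.E, ¬ G.Collapsible e) :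
    IsProjCover G.fV (G.H0Mod k) (G.covHom k) ∧
    ∀ (J : Type) (_ : Fintype J) (fJ : J → P)
      (g' : PersHom k (freePers k J fJ) (G.H0Mod k)),
        IsProjCover fJ (G.H0Mod k) g' →
          ∀ p : P, Nat.card {j : J // fJ j = p} = Nat.card {v : G.V // G.fV v = p} := by
  have hcov : IsProjCover G.fV (G.H0Mod k) (G.covHom k) := by
    refine ⟨fun r => Submodule.mkQ_surjective _, fun J _ fJ g' hg' => ?_⟩
    simpa only [Nat.card_eq_fintype_card] using
      card_le_card_of_card_fiber_le (G.card_born_le k hvm g' hg')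
  refine ⟨hcov, fun J _ fJ g' hg' p => (card_fiber_eq_of_card_fiber_le
    (G.card_born_le k hvm g' hg'.1) ?_ p).symm⟩
  simpa only [Nat.card_eq_fintype_card] using hg'.2 G.V _ G.fV (G.covHom k) hcov.1
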